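/- arXiv:1706.03626 — 4 statements merged into one kernel-verified Lean document; each statement's English description precedes it below -/
import Mathlib

section
/- Let V be a finite-dimensional real vector space and let χ₁,…,χₙ : V → ℝ be nonzero linear functionals. Suppose that for every index i there exists a ∈ V with χᵢ(a) > 0 and χⱼ(a) < 0 for all j whose functional χⱼ is not a positive scalar multiple of χᵢ. If there exist indices i ≠ j with χᵢ = c·χⱼ for some c < 0, and additionally there is some χₖ that is not a real scalar multiple of χᵢ, then a contradiction follows. -/
/-- Totally non-symplectic property from the fullness assumption: if the nonzero
Lyapunov functionals satisfy fullness, two of them are negatively proportional, and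
some functional is not proportional to them, then we get a contradiction. -/
theorem stmt0 {V : Type*} [AddCommGroup V] [Module ℝ V] [FiniteDimensional ℝ V]
    {n : ℕ} (χ : Fin n → (V →ₗ[ℝ] ℝ)) (hne : ∀ i, χ i ≠ 0)
    (hfull : ∀ i, ∃ a : V, 0 < χ i a ∧
      ∀ j, (¬ ∃ c : ℝ, 0 < c ∧ χ j = c • χ i) → χ j a < 0)
    (i j : Fin n) (hij : i ≠ j) (c : ℝ) (hc : c < 0) (hprop : χ i = c • χ j)
    (k : Fin n) (hk : ¬ ∃ d : ℝ, d ≠ 0 ∧ χ k = d • χ i) :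
    False := by
  obtain ⟨a, hka, hneg⟩ := hfull k
  have hi : χ i a < 0 := by
    refine hneg i ?_
    rintro ⟨e, he, hie⟩
    exact hk ⟨e⁻¹, inv_ne_zero he.ne', by rw [hie, smul_smul, inv_mul_cancel₀ he.ne', one_smul]⟩
  have hj : χ j a < 0 := by
    refine hneg j ?_
    rintro ⟨e, he, hje⟩
    have hce : c * e ≠ 0 := mul_ne_zero hc.ne he.ne'
    refine hk ⟨(c * e)⁻¹, inv_ne_zero hce, ?_⟩
    rw [hprop, hje, smul_smul, smul_smul, mul_assoc, inv_mul_cancel₀ hce, one_smul]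
  have : χ i a = c * χ j a := by rw [hprop]; simp
  nlinarith
end

section
/- Let (X, μ) be a probability space and let P₁, P₂, P₃ be measurable partitions of X such that P₁ refines P₂ and P₂ refines P₃. Suppose ν₃ denotes a family of measures on the atoms of P₃, with conditional measure families ν₂ on atoms of P₂ and ν₁ on atoms of P₁. If the disintegration of each ν₃-measure along P₂ gives measures equivalent to the ν₂-measures, and the disintegration of each ν₂-measure along P₁ gives measures equivalent to the ν₁-measures, then the disintegration of each ν₃-measure along P₁ gives measures equivalent to the ν₁-measures. Concretely: for a measurable set Z in an atom of P₁'s ambient space, ν-almost-everywhere vanishing along P₂ then along P₃ is equivalent to vanishing for ν₁. -/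
open MeasureTheory

/-- `νbig` has Lebesgue disintegration along `νsmall`: a measurable set is
`νbig x`-null iff its `νsmall`-leaf measures vanish `νbig x`-almost everywhere. -/
def LebesgueDisintegration {X : Type*} [MeasurableSpace X]
    (νbig νsmall : X → Measure X) : Prop :=
  ∀ x : X, ∀ Z : Set X, MeasurableSet Z →
    (νbig x Z = 0 ↔ ∀ᵐ z ∂(νbig x), νsmall z Z = 0)

/- Let `N = {z | ν₁ z Z ≠ 0}`. Disintegrating `ν₂` along `ν₁` says that `Z` and `N` have the
same `ν₂`-null leaves, so disintegrating `ν₃` along `ν₂` makes `Z` and `N` simultaneously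
`ν₃ x`-null; and `ν₃ x N = 0` is exactly the claim. Measurability of `N` is what allows the
second disintegration to be applied to it. -/

namespace LebesgueDisintegration

variable {X : Type*} [MeasurableSpace X] {νbig νsmall : X → Measure X}

theorem measure_eq_zero_iff_measure_compl_setOf (h : LebesgueDisintegration νbig νsmall)
    (x : X) {Z : Set X} (hZ : MeasurableSet Z) :
    νbig x Z = 0 ↔ νbig x {z | νsmall z Z = 0}ᶜ = 0 :=
  (h x Z hZ).trans ae_iff

end LebesgueDisintegration

theorem stmt2_general {X : Type*} [MeasurableSpace X]
    (ν₁ ν₂ ν₃ : X → Measure X)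
    (hmeas₁ : ∀ Z : Set X, MeasurableSet Z → MeasurableSet {z | ν₁ z Z = 0})
    (h32 : LebesgueDisintegration ν₃ ν₂)
    (h21 : LebesgueDisintegration ν₂ ν₁) :
    LebesgueDisintegration ν₃ ν₁ := by
  intro x Z hZ
  have hN : MeasurableSet {z | ν₁ z Z = 0}ᶜ := (hmeas₁ Z hZ).compl
  calc ν₃ x Z = 0 ↔ ∀ᵐ z ∂(ν₃ x), ν₂ z Z = 0 := h32 x Z hZ
    _ ↔ ∀ᵐ z ∂(ν₃ x), ν₂ z {w | ν₁ w Z = 0}ᶜ = 0 := by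
      simp only [h21.measure_eq_zero_iff_measure_compl_setOf _ hZ]
    _ ↔ ν₃ x {w | ν₁ w Z = 0}ᶜ = 0 := (h32 x _ hN).symm
    _ ↔ ∀ᵐ z ∂(ν₃ x), ν₁ z Z = 0 := ae_iff.symm

/-- Transitivity of Lebesgue disintegration through a filtration of (leafwise)
measure families `ν₁, ν₂, ν₃` associated to nested measurable partitions. -/
theorem stmt2 {X : Type*} [MeasurableSpace X]
    (ν₁ ν₂ ν₃ : X → Measure X)
    (hmeas₁ : ∀ Z : Set X, MeasurableSet Z → MeasurableSet {z | ν₁ z Z = 0})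
    (hmeas₂ : ∀ Z : Set X, MeasurableSet Z → MeasurableSet {z | ν₂ z Z = 0})
    (h32 : LebesgueDisintegration ν₃ ν₂)
    (h21 : LebesgueDisintegration ν₂ ν₁) :
    LebesgueDisintegration ν₃ ν₁ :=
  stmt2_general ν₁ ν₂ ν₃ hmeas₁ h32 h21
end

section
/- With C, D as above and f, g the 8×8 matrices of the previous statement, the element f⁵ g⁻² acts on the generalized eigenspace blocks with rates: on the C-blocks it acts like C⁵(C²)⁻² = C (expanding, since 2+√3 > 1), and on the D-blocks like D⁵(D³)⁻² = D⁻¹ (so the block with eigenvalue 3+2√2 becomes contracting). Hence the unstable space of f is E¹ ⊕ E³ while the unstable space of f⁵g⁻² is E¹ ⊕ E⁴, where E¹,E² are the eigenspace-blocks of C for eigenvalues 2±√3 and E³,E⁴ those of D for 3±2√2. In particular f and f⁵g⁻² have different unstable spaces. -/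
open Matrix

noncomputable def Cmat : Matrix (Fin 2) (Fin 2) ℝ := !![2, 3; 1, 2]

noncomputable def Dmat : Matrix (Fin 2) (Fin 2) ℝ := !![3, 4; 2, 3]

noncomputable def fmat :
    Matrix ((Fin 2 ⊕ Fin 2) ⊕ (Fin 2 ⊕ Fin 2)) ((Fin 2 ⊕ Fin 2) ⊕ (Fin 2 ⊕ Fin 2)) ℝ :=
  fromBlocks (fromBlocks Cmat 1 0 Cmat) 0 0 (fromBlocks Dmat 0 0 Dmat)

noncomputable def gmat :
    Matrix ((Fin 2 ⊕ Fin 2) ⊕ (Fin 2 ⊕ Fin 2)) ((Fin 2 ⊕ Fin 2) ⊕ (Fin 2 ⊕ Fin 2)) ℝ :=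
  fromBlocks (fromBlocks (Cmat ^ 2) 0 0 (Cmat ^ 2)) 0 0
    (fromBlocks (Dmat ^ 3) 1 0 (Dmat ^ 3))

/-- The unstable space of a real matrix: the sum of the generalized eigenspaces for
eigenvalues of absolute value greater than one. -/
noncomputable def unstableSpace {ι : Type*} [Fintype ι] [DecidableEq ι]
    (A : Matrix ι ι ℝ) : Submodule ℝ (ι → ℝ) :=
  ⨆ μ : {μ : ℝ // 1 < |μ|}, Module.End.maxGenEigenspace (Matrix.toLin' A) (μ : ℝ)

/-! `f` and `g` are block diagonal, with a `C`-part on the first four coordinates and a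
`D`-part on the last four, and each part has the shape `[[X, N], [0, X]]` with `N` commuting
with `X`. For such a shape, a pair of eigenvectors of `X` for `μ` placed in the two halves is a
pair of generalized eigenvectors for `μ` (`(M - μ)² = 0` on them). The planes obtained this way
from the eigenvalues `2 ± √3` of `C` and `3 ± 2√2` of `D` span `ℝ⁸`, so by independence of
generalized eigenspaces they are exactly the generalized eigenspaces of `f`, and every other
generalized eigenspace vanishes. The same planes serve for `f⁵g⁻²`, which has the blocks
`[[C, 5], [0, C]]` and `[[D⁻¹, -2D⁻⁴], [0, D⁻¹]]`: since `(3 + 2√2)⁻¹ = 3 - 2√2`, the roles of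
the two `D`-planes are exchanged, and the unstable space changes from `E¹ ⊔ E³` to `E¹ ⊔ E⁴`. -/

theorem iSup_fin_four {α : Type*} [CompleteLattice α] {f : Fin 4 → α} :
    ⨆ i, f i = f 0 ⊔ f 1 ⊔ f 2 ⊔ f 3 := by
  suffices ⨆ i ∈ Finset.univ, f i = f 0 ⊔ f 1 ⊔ f 2 ⊔ f 3 by simp [← this]
  rw [← Finset.sup_eq_iSup, show (Finset.univ : Finset (Fin 4)) = {0, 1, 2, 3} from rfl]
  simp [sup_assoc]

open Module.End

namespace Module.End

variable {K V : Type*} [Field K] [AddCommGroup V] [Module K V]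

theorem maxGenEigenspace_eq_iSup_of_iSup_eq_top {ι : Type*} (φ : End K V) (μ : ι → K)
    (S : ι → Submodule K V) (hS : ∀ i, S i ≤ φ.maxGenEigenspace (μ i))
    (hS_top : ⨆ i, S i = ⊤) (ν : K) :
    φ.maxGenEigenspace ν = ⨆ (i) (_ : μ i = ν), S i := by
  have hsup : ⨆ ν, ⨆ (i) (_ : μ i = ν), S i = ⊤ := by
    rw [iSup_comm]; simpa only [iSup_iSup_eq_right] using hS_top
  have hle : (fun ν ↦ ⨆ (i) (_ : μ i = ν), S i) ≤ φ.maxGenEigenspace := fun ν ↦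
    iSup₂_le fun i hi ↦ hi ▸ hS i
  exact (congrFun ((φ.independent_maxGenEigenspace.le_iff_eq_of_iSup_eq_top hsup).mp hle) ν).symm

theorem maxGenEigenspace_apply_eq_of_iSup_eq_top {ι : Type*} (φ : End K V) {μ : ι → K}
    (hμ : Function.Injective μ) (S : ι → Submodule K V)
    (hS : ∀ i, S i ≤ φ.maxGenEigenspace (μ i)) (hS_top : ⨆ i, S i = ⊤) (i : ι) :
    φ.maxGenEigenspace (μ i) = S i := by
  rw [maxGenEigenspace_eq_iSup_of_iSup_eq_top φ μ S hS hS_top]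
  simp only [hμ.eq_iff, iSup_iSup_eq_left]

theorem maxGenEigenspace_sup_ne_sup (φ : End K V) {a b c : K} (hab : a ≠ b) (hcb : c ≠ b)
    (hb : φ.maxGenEigenspace b ≠ ⊥) :
    φ.maxGenEigenspace a ⊔ φ.maxGenEigenspace b ≠
      φ.maxGenEigenspace a ⊔ φ.maxGenEigenspace c := by
  intro h
  have hdisj : Disjoint (φ.maxGenEigenspace b) (φ.maxGenEigenspace a ⊔ φ.maxGenEigenspace c) :=
    (φ.independent_maxGenEigenspace b).mono_right
      (sup_le (le_iSup₂_of_le a hab le_rfl) (le_iSup₂_of_le c hcb le_rfl))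
  exact hb (hdisj.eq_bot_of_le (h ▸ le_sup_right))

theorem eigenspace_sup_eigenspace_eq_top [FiniteDimensional K V] (hV : Module.finrank K V = 2)
    (φ : End K V) {a b : K} (hab : a ≠ b) (ha : φ.HasEigenvalue a) (hb : φ.HasEigenvalue b) :
    φ.eigenspace a ⊔ φ.eigenspace b = ⊤ := by
  have hdisj : Disjoint (φ.eigenspace a) (φ.eigenspace b) :=
    φ.eigenspaces_iSupIndep.pairwiseDisjoint hab
  have ha' := Submodule.one_le_finrank_iff.mpr (hasEigenvalue_iff.mp ha)
  have hb' := Submodule.one_le_finrank_iff.mpr (hasEigenvalue_iff.mp hb)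
  apply Submodule.eq_top_of_finrank_eq
  have := Submodule.finrank_sup_add_finrank_inf_eq (φ.eigenspace a) (φ.eigenspace b)
  rw [hdisj.eq_bot, finrank_bot] at this
  have := Submodule.finrank_le (φ.eigenspace a ⊔ φ.eigenspace b)
  omega

end Module.End

namespace Submodule

variable {R m n : Type*} [Semiring R]

def sumElim (p : Submodule R (m → R)) (q : Submodule R (n → R)) : Submodule R (m ⊕ n → R) :=
  (p.prod q).comap (LinearEquiv.sumArrowLequivProdArrow m n R R).toLinearMap

variable {p p' : Submodule R (m → R)} {q q' : Submodule R (n → R)}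

@[simp]
theorem mem_sumElim {v : m ⊕ n → R} : v ∈ p.sumElim q ↔ v ∘ Sum.inl ∈ p ∧ v ∘ Sum.inr ∈ q :=
  Iff.rfl

theorem sumElim_mono (hp : p ≤ p') (hq : q ≤ q') : p.sumElim q ≤ p'.sumElim q' :=
  fun _ hv ↦ ⟨hp hv.1, hq hv.2⟩

theorem sumElim_sup_sumElim : p.sumElim q ⊔ p'.sumElim q' = (p ⊔ p').sumElim (q ⊔ q') := by
  simp only [sumElim, comap_equiv_eq_map_symm, ← map_sup, prod_sup_prod]

@[simp]
theorem top_sumElim_top : (⊤ : Submodule R (m → R)).sumElim (⊤ : Submodule R (n → R)) = ⊤ := by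
  ext; simp

theorem sumElim_eq_bot_iff : p.sumElim q = ⊥ ↔ p = ⊥ ∧ q = ⊥ := by
  simp only [sumElim, comap_equiv_eq_map_symm, Submodule.map_eq_bot_iff, prod_eq_bot_iff]

end Submodule

namespace Matrix

variable {K m n : Type*} [Field K] [DecidableEq m] [DecidableEq n]

theorem fromBlocks_sub_smul_one (A : Matrix m m K) (B : Matrix m n K) (C : Matrix n m K)
    (D : Matrix n n K) (μ : K) :
    fromBlocks A B C D - μ • 1 = fromBlocks (A - μ • 1) B C (D - μ • 1) := by
  rw [← fromBlocks_one, fromBlocks_smul, sub_eq_add_neg, fromBlocks_neg, fromBlocks_add]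
  simp [sub_eq_add_neg]

variable [Fintype m] [Fintype n]

theorem mem_eigenspace_toLin'_iff {A : Matrix n n K} {μ : K} {v : n → K} :
    v ∈ eigenspace (toLin' A) μ ↔ A *ᵥ v = μ • v := by
  rw [Module.End.mem_eigenspace_iff, toLin'_apply]

theorem mem_maxGenEigenspace_toLin'_iff {A : Matrix n n K} {μ : K} {v : n → K} :
    v ∈ maxGenEigenspace (toLin' A) μ ↔ ∃ k : ℕ, ((A - μ • 1) ^ k) *ᵥ v = 0 := by
  have h : toLin' A - μ • 1 = toLin' (A - μ • 1) := by
    rw [map_sub, map_smul, toLin'_one, Module.End.one_eq_id]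
  simp only [Module.End.mem_maxGenEigenspace, h, ← toLin'_pow, toLin'_apply]

def eigenPlane (P : Matrix m m K) (μ : K) : Submodule K (m ⊕ m → K) :=
  (eigenspace (toLin' P) μ).sumElim (eigenspace (toLin' P) μ)

theorem sumElim_maxGenEigenspace_le_maxGenEigenspace_fromBlocks (A : Matrix m m K)
    (B : Matrix n n K) (μ : K) :
    (maxGenEigenspace (toLin' A) μ).sumElim (maxGenEigenspace (toLin' B) μ) ≤
      maxGenEigenspace (toLin' (fromBlocks A 0 0 B)) μ := by
  intro v hv
  obtain ⟨k, hk⟩ := mem_maxGenEigenspace_toLin'_iff.mp (Submodule.mem_sumElim.mp hv).1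
  obtain ⟨l, hl⟩ := mem_maxGenEigenspace_toLin'_iff.mp (Submodule.mem_sumElim.mp hv).2
  refine mem_maxGenEigenspace_toLin'_iff.mpr ⟨l + k, ?_⟩
  rw [fromBlocks_sub_smul_one, fromBlocks_diagonal_pow, fromBlocks_mulVec, pow_add, pow_add,
    ← mulVec_mulVec, hk, pow_mul_comm, ← mulVec_mulVec, hl]
  simp

theorem eigenPlane_le_maxGenEigenspace_fromBlocks {P N : Matrix m m K} (hPN : Commute P N)
    (μ : K) : eigenPlane P μ ≤ maxGenEigenspace (toLin' (fromBlocks P N 0 P)) μ := by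
  intro v hv
  have hker : ∀ x ∈ eigenspace (toLin' P) μ, (P - μ • 1) *ᵥ x = 0 := fun x hx ↦ by
    rw [sub_mulVec, smul_mulVec, one_mulVec, sub_eq_zero]
    exact mem_eigenspace_toLin'_iff.mp hx
  have hx := hker _ (Submodule.mem_sumElim.mp hv).1
  have hy := hker _ (Submodule.mem_sumElim.mp hv).2
  have hcomm : Commute (P - μ • 1) N := hPN.sub_left ((Commute.one_left N).smul_left μ)
  refine mem_maxGenEigenspace_toLin'_iff.mpr ⟨2, ?_⟩
  rw [fromBlocks_sub_smul_one, sq, fromBlocks_multiply, fromBlocks_mulVec]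
  simp only [mul_zero, add_zero, zero_mul, zero_add, zero_mulVec, add_mulVec, ← mulVec_mulVec,
    hx, hy, hcomm.eq]
  simp

theorem eigenPlane_sumElim_bot_le {P N : Matrix m m K} (hPN : Commute P N) (B : Matrix n n K)
    (μ : K) : (eigenPlane P μ).sumElim ⊥ ≤
      maxGenEigenspace (toLin' (fromBlocks (fromBlocks P N 0 P) 0 0 B)) μ :=
  (Submodule.sumElim_mono (eigenPlane_le_maxGenEigenspace_fromBlocks hPN μ) bot_le).trans
    (sumElim_maxGenEigenspace_le_maxGenEigenspace_fromBlocks _ _ μ)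

theorem bot_sumElim_eigenPlane_le {Q L : Matrix n n K} (hQL : Commute Q L) (A : Matrix m m K)
    (μ : K) : (⊥ : Submodule K (m → K)).sumElim (eigenPlane Q μ) ≤
      maxGenEigenspace (toLin' (fromBlocks A 0 0 (fromBlocks Q L 0 Q))) μ :=
  (Submodule.sumElim_mono bot_le (eigenPlane_le_maxGenEigenspace_fromBlocks hQL μ)).trans
    (sumElim_maxGenEigenspace_le_maxGenEigenspace_fromBlocks _ _ μ)

theorem eigenspace_toLin'_le_eigenspace_toLin'_inv {A : Matrix n n K} (hA : IsUnit A.det)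
    (μ : K) : eigenspace (toLin' A) μ ≤ eigenspace (toLin' A⁻¹) μ⁻¹ := by
  intro v hv
  rw [mem_eigenspace_toLin'_iff] at hv ⊢
  have hv' : v = μ • (A⁻¹ *ᵥ v) := by
    rw [← mulVec_smul, ← hv, mulVec_mulVec, nonsing_inv_mul _ hA, one_mulVec]
  rcases eq_or_ne μ 0 with rfl | hμ
  · rw [zero_smul] at hv'
    simp [hv']
  · rw [hv', smul_smul, inv_mul_cancel₀ hμ, one_smul, ← hv']

theorem eigenPlane_le_eigenPlane_inv {P : Matrix m m K} (hP : IsUnit P.det) (μ : K) :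
    eigenPlane P μ ≤ eigenPlane P⁻¹ μ⁻¹ :=
  Submodule.sumElim_mono (eigenspace_toLin'_le_eigenspace_toLin'_inv hP μ)
    (eigenspace_toLin'_le_eigenspace_toLin'_inv hP μ)

theorem hasEigenvalue_toLin'_fin_two {a b c s ε μ : K} (hs : s ≠ 0) (hb : b = c * s ^ 2)
    (hε : ε ^ 2 = 1) (hμ : μ = a + ε * c * s) : HasEigenvalue (toLin' !![a, b; c, a]) μ := by
  refine hasEigenvalue_of_hasEigenvector (x := ![s, ε]) ⟨mem_eigenspace_toLin'_iff.mpr ?_, ?_⟩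
  · have hmul : !![a, b; c, a] *ᵥ ![s, ε] = ![a * s + b * ε, c * s + a * ε] := by
      ext i; fin_cases i <;> simp [mulVec]
    rw [hmul, smul_vec2]
    exact vec2_eq (by rw [hb, hμ]; ring)
      (by rw [hμ]; linear_combination (-(c * s)) * hε)
  · intro h
    exact hs (congrFun h 0)

theorem pow_mul_inv_pow_pow {A : Matrix n n K} (hA : IsUnit A.det) (a k j : ℕ) :
    A ^ a * ((A ^ k)⁻¹) ^ j = A ^ ((a : ℤ) - k * j) := by
  rw [← zpow_neg_natCast, ← zpow_natCast _ j, ← zpow_mul _ hA, ← zpow_natCast, ← zpow_add hA]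
  ring_nf

end Matrix

theorem unstableSpace_eq_iSup {ι n : Type*} [Fintype n] [DecidableEq n] (A : Matrix n n ℝ)
    (μ : ι → ℝ) (S : ι → Submodule ℝ (n → ℝ))
    (hS : ∀ i, S i ≤ maxGenEigenspace (toLin' A) (μ i)) (hS_top : ⨆ i, S i = ⊤) :
    unstableSpace A = ⨆ (i) (_ : 1 < |μ i|), S i := by
  simp only [unstableSpace, maxGenEigenspace_eq_iSup_of_iSup_eq_top _ μ S hS hS_top]
  apply le_antisymm
  · exact iSup_le fun ν ↦ iSup₂_le fun i hi ↦ le_iSup₂_of_le i (hi ▸ ν.2) le_rfl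
  · exact iSup₂_le fun i hi ↦ le_iSup_of_le ⟨μ i, hi⟩ (le_iSup₂_of_le i rfl le_rfl)

theorem sqrt_three_bounds : 1.7 < √3 ∧ √3 < 1.8 := by
  constructor <;> nlinarith [Real.mul_self_sqrt (show (0 : ℝ) ≤ 3 by norm_num), Real.sqrt_nonneg 3]

theorem sqrt_two_bounds : 1.4 < √2 ∧ √2 < 1.5 := by
  constructor <;> nlinarith [Real.mul_self_sqrt (show (0 : ℝ) ≤ 2 by norm_num), Real.sqrt_nonneg 2]

theorem three_add_two_sqrt_two_mul : (3 + 2 * √2) * (3 - 2 * √2) = 1 := by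
  nlinarith [Real.mul_self_sqrt (show (0 : ℝ) ≤ 2 by norm_num)]

theorem hasEigenvalue_Cmat {ε μ : ℝ} (hε : ε ^ 2 = 1) (hμ : μ = 2 + ε * √3) :
    HasEigenvalue (toLin' Cmat) μ :=
  hasEigenvalue_toLin'_fin_two (c := 1) (s := √3) (by positivity) (by simp) hε
    (by rw [hμ]; ring)

theorem hasEigenvalue_Dmat {ε μ : ℝ} (hε : ε ^ 2 = 1) (hμ : μ = 3 + ε * (2 * √2)) :
    HasEigenvalue (toLin' Dmat) μ :=
  hasEigenvalue_toLin'_fin_two (c := 2) (s := √2) (by positivity) (by norm_num) hε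
    (by rw [hμ]; ring)

theorem isUnit_det_Cmat : IsUnit Cmat.det := by
  norm_num [Cmat, det_fin_two_of]

theorem isUnit_det_Dmat : IsUnit Dmat.det := by
  norm_num [Dmat, det_fin_two_of]

theorem isUnit_det_gmat : IsUnit gmat.det := by
  simpa [gmat, det_fromBlocks_zero₂₁] using ⟨isUnit_det_Cmat.ne_zero, isUnit_det_Dmat.ne_zero⟩

theorem Dmat_inv : Dmat⁻¹ = !![3, -4; -2, 3] := by
  apply inv_eq_right_inv
  rw [Dmat, mul_fin_two, one_fin_two]
  norm_num

theorem fmat_pow_five_mul_inv_gmat_sq : fmat ^ 5 * (gmat⁻¹) ^ 2 =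
    fromBlocks (fromBlocks Cmat 5 0 Cmat) 0 0 (fromBlocks Dmat⁻¹ (-2 • Dmat⁻¹ ^ 4) 0 Dmat⁻¹) := by
  have hf : fmat ^ 5 = fromBlocks (fromBlocks Cmat 5 0 Cmat) 0 0
      (fromBlocks Dmat⁻¹ (-2 • Dmat⁻¹ ^ 4) 0 Dmat⁻¹) * gmat ^ 2 := by
    have h0 : (!![0, 0; 0, 0] : Matrix (Fin 2) (Fin 2) ℝ) = 0 := (eta_fin_two 0).symm
    rw [Dmat_inv, fmat, gmat, ofNat_fin_two]
    simp only [fromBlocks_multiply, pow_succ, pow_zero, one_mul]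
    norm_num [Cmat, Dmat, fromBlocks_multiply, mul_fin_two, one_fin_two, h0]
  rw [hf, inv_pow' gmat 2, mul_assoc,
    mul_nonsing_inv _ (by rw [det_pow]; exact isUnit_det_gmat.pow 2), mul_one]

/-- `blockSpaces i` is the paper's `Eⁱ⁺¹`. -/
noncomputable def blockSpaces : Fin 4 → Submodule ℝ ((Fin 2 ⊕ Fin 2) ⊕ (Fin 2 ⊕ Fin 2) → ℝ) :=
  ![(eigenPlane Cmat (2 + √3)).sumElim ⊥, (eigenPlane Cmat (2 - √3)).sumElim ⊥,
    (⊥ : Submodule ℝ (Fin 2 ⊕ Fin 2 → ℝ)).sumElim (eigenPlane Dmat (3 + 2 * √2)),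
    (⊥ : Submodule ℝ (Fin 2 ⊕ Fin 2 → ℝ)).sumElim (eigenPlane Dmat (3 - 2 * √2))]

theorem iSup_blockSpaces_eq_top : ⨆ i, blockSpaces i = ⊤ := by
  have hC : eigenspace (toLin' Cmat) (2 + √3) ⊔ eigenspace (toLin' Cmat) (2 - √3) = ⊤ :=
    eigenspace_sup_eigenspace_eq_top (Module.finrank_fin_fun ℝ) _
      (by linarith [sqrt_three_bounds.1])
      (hasEigenvalue_Cmat (ε := 1) (by norm_num) (by ring))
      (hasEigenvalue_Cmat (ε := -1) (by norm_num) (by ring))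
  have hD : eigenspace (toLin' Dmat) (3 + 2 * √2) ⊔ eigenspace (toLin' Dmat) (3 - 2 * √2) = ⊤ :=
    eigenspace_sup_eigenspace_eq_top (Module.finrank_fin_fun ℝ) _
      (by linarith [sqrt_two_bounds.1])
      (hasEigenvalue_Dmat (ε := 1) (by norm_num) (by ring))
      (hasEigenvalue_Dmat (ε := -1) (by norm_num) (by ring))
  rw [iSup_fin_four, sup_assoc]
  simp only [blockSpaces, eigenPlane, Matrix.cons_val, Submodule.sumElim_sup_sumElim, hC, hD,
    bot_sup_eq, sup_bot_eq, Submodule.top_sumElim_top]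

theorem blockSpaces_le_maxGenEigenspace_fmat (i : Fin 4) :
    blockSpaces i ≤
      maxGenEigenspace (toLin' fmat) (![2 + √3, 2 - √3, 3 + 2 * √2, 3 - 2 * √2] i) := by
  fin_cases i
  · exact eigenPlane_sumElim_bot_le (Commute.one_right _) _ _
  · exact eigenPlane_sumElim_bot_le (Commute.one_right _) _ _
  · exact bot_sumElim_eigenPlane_le (Commute.zero_right _) _ _
  · exact bot_sumElim_eigenPlane_le (Commute.zero_right _) _ _

theorem blockSpaces_le_maxGenEigenspace_fmat_pow_five_mul_inv_gmat_sq (i : Fin 4) :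
    blockSpaces i ≤ maxGenEigenspace (toLin' (fmat ^ 5 * (gmat⁻¹) ^ 2))
      (![2 + √3, 2 - √3, 3 - 2 * √2, 3 + 2 * √2] i) := by
  have hcomm : Commute Dmat⁻¹ (-2 • Dmat⁻¹ ^ 4) := ((Commute.refl _).pow_right 4).smul_right _
  have hinv : (3 + 2 * √2)⁻¹ = 3 - 2 * √2 ∧ (3 - 2 * √2)⁻¹ = 3 + 2 * √2 :=
    ⟨inv_eq_of_mul_eq_one_right three_add_two_sqrt_two_mul,
      inv_eq_of_mul_eq_one_left three_add_two_sqrt_two_mul⟩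
  rw [fmat_pow_five_mul_inv_gmat_sq]
  fin_cases i
  · exact eigenPlane_sumElim_bot_le (Commute.ofNat_right _ 5) _ _
  · exact eigenPlane_sumElim_bot_le (Commute.ofNat_right _ 5) _ _
  · refine (Submodule.sumElim_mono le_rfl
      (eigenPlane_le_eigenPlane_inv isUnit_det_Dmat _)).trans ?_
    simpa [hinv.1] using bot_sumElim_eigenPlane_le hcomm _ ((3 + 2 * √2)⁻¹)
  · refine (Submodule.sumElim_mono le_rfl
      (eigenPlane_le_eigenPlane_inv isUnit_det_Dmat _)).trans ?_
    simpa [hinv.2] using bot_sumElim_eigenPlane_le hcomm _ ((3 - 2 * √2)⁻¹)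

theorem one_lt_abs_eigenvalues :
    1 < |2 + √3| ∧ ¬ 1 < |2 - √3| ∧ 1 < |3 + 2 * √2| ∧ ¬ 1 < |3 - 2 * √2| := by
  obtain ⟨h3, h3'⟩ := sqrt_three_bounds
  obtain ⟨h2, h2'⟩ := sqrt_two_bounds
  refine ⟨lt_abs.mpr (Or.inl (by linarith)), not_lt.mpr (abs_le.mpr ⟨by linarith, by linarith⟩),
    lt_abs.mpr (Or.inl (by linarith)), not_lt.mpr (abs_le.mpr ⟨by linarith, by linarith⟩)⟩

theorem maxGenEigenspace_fmat (i : Fin 4) :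
    maxGenEigenspace (toLin' fmat) (![2 + √3, 2 - √3, 3 + 2 * √2, 3 - 2 * √2] i) =
      blockSpaces i := by
  refine maxGenEigenspace_apply_eq_of_iSup_eq_top _ ?_ _ blockSpaces_le_maxGenEigenspace_fmat
    iSup_blockSpaces_eq_top i
  obtain ⟨h3, h3'⟩ := sqrt_three_bounds
  obtain ⟨h2, h2'⟩ := sqrt_two_bounds
  intro i j h
  fin_cases i <;> fin_cases j <;> first | rfl | (simp at h; linarith)

theorem unstableSpace_fmat : unstableSpace fmat = blockSpaces 0 ⊔ blockSpaces 2 := by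
  rw [unstableSpace_eq_iSup _ _ _ blockSpaces_le_maxGenEigenspace_fmat iSup_blockSpaces_eq_top,
    iSup_fin_four]
  simp [one_lt_abs_eigenvalues]

theorem unstableSpace_fmat_pow_five_mul_inv_gmat_sq :
    unstableSpace (fmat ^ 5 * (gmat⁻¹) ^ 2) = blockSpaces 0 ⊔ blockSpaces 3 := by
  rw [unstableSpace_eq_iSup _ _ _ blockSpaces_le_maxGenEigenspace_fmat_pow_five_mul_inv_gmat_sq
    iSup_blockSpaces_eq_top, iSup_fin_four]
  simp [one_lt_abs_eigenvalues]

theorem blockSpaces_two_ne_bot : blockSpaces 2 ≠ ⊥ := by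
  have h := hasEigenvalue_iff.mp
    (hasEigenvalue_Dmat (μ := 3 + 2 * √2) (ε := 1) (one_pow 2) (by ring))
  simpa [blockSpaces, eigenPlane, Submodule.sumElim_eq_bot_iff] using h

/-- `f⁵g⁻²` acts as `C` on the `C`-blocks and as `D⁻¹` on the `D`-blocks, hence its
unstable space is `E¹ ⊔ E⁴` while that of `f` is `E¹ ⊔ E³`; in particular `f` and
`f⁵g⁻²` have different unstable spaces. -/
theorem stmt10 :
    let E1 := Module.End.maxGenEigenspace (Matrix.toLin' fmat) (2 + Real.sqrt 3)
    let E3 := Module.End.maxGenEigenspace (Matrix.toLin' fmat) (3 + 2 * Real.sqrt 2)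
    let E4 := Module.End.maxGenEigenspace (Matrix.toLin' fmat) (3 - 2 * Real.sqrt 2)
    Cmat ^ 5 * ((Cmat ^ 2)⁻¹) ^ 2 = Cmat
    ∧ Dmat ^ 5 * ((Dmat ^ 3)⁻¹) ^ 2 = Dmat⁻¹
    ∧ 1 < 2 + Real.sqrt 3
    ∧ 0 < 3 - 2 * Real.sqrt 2 ∧ 3 - 2 * Real.sqrt 2 < 1
    ∧ unstableSpace fmat = E1 ⊔ E3
    ∧ unstableSpace (fmat ^ 5 * (gmat⁻¹) ^ 2) = E1 ⊔ E4
    ∧ E1 ⊔ E3 ≠ E1 ⊔ E4 := by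
  intro E1 E3 E4
  have hE1 : E1 = blockSpaces 0 := maxGenEigenspace_fmat 0
  have hE3 : E3 = blockSpaces 2 := maxGenEigenspace_fmat 2
  have hE4 : E4 = blockSpaces 3 := maxGenEigenspace_fmat 3
  obtain ⟨h3, h3'⟩ := sqrt_three_bounds
  obtain ⟨h2, h2'⟩ := sqrt_two_bounds
  refine ⟨?_, ?_, by linarith, by linarith, by linarith, ?_, ?_, ?_⟩
  · rw [pow_mul_inv_pow_pow isUnit_det_Cmat]; norm_num
  · rw [pow_mul_inv_pow_pow isUnit_det_Dmat]; norm_num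
  · rw [unstableSpace_fmat, hE1, hE3]
  · rw [unstableSpace_fmat_pow_five_mul_inv_gmat_sq, hE1, hE4]
  · exact maxGenEigenspace_sup_ne_sup _ (by linarith) (by linarith)
      (show E3 ≠ ⊥ from hE3 ▸ blockSpaces_two_ne_bot)
end

section
/- Let f : X → X be a bijection of a set, E a normed vector bundle over X (or a family of normed spaces E_x with linear isomorphisms A_x : E_x → E_{f x} defining a cocycle), and suppose H^u is a collection of linear maps H_{xy} : E_x → E_y defined for y in the 'local leaf' of x satisfying: (a) H_{xx} = Id and H_{yz}∘H_{xy} = H_{xz}; (b) H_{xy} = A^n_{f^{-n}y} ∘ H_{f^{-n}x, f^{-n}y} ∘ (A^n_x)^{-1} for all n ≥ 0; (c) ‖H_{xy} − I_{xy}‖ ≤ C·d(x,y)^β for fixed identifications I_{xy}. Then any two collections H, H' satisfying (a), (b), (c) with constants C, C' coincide, provided the cocycle uniformly contracts distances along leaves: d(f^{-n}x, f^{-n}y) ≤ λⁿ d(x,y) for some λ < 1, and the norms ‖A^n_x‖·‖(A^n_x)^{-1}‖ grow at most like μⁿ with μ·λ^β < 1. -/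
/-- Uniqueness of unstable holonomies of a fiber-bunched linear cocycle: two
collections of identifications satisfying the groupoid property (a), the
equivariance property (b) and the Hölder-closeness property (c) coincide, given
uniform contraction along leaves in the past and the fiber-bunching inequality
`μ · λ^β < 1`. -/
theorem stmt13 {X E : Type*} [MetricSpace X]
    [NormedAddCommGroup E] [NormedSpace ℝ E]
    (f : X ≃ X) (A : X → (E ≃L[ℝ] E))
    (An : X → ℕ → (E ≃L[ℝ] E))
    (hAn0 : ∀ x, An x 0 = ContinuousLinearEquiv.refl ℝ E)
    (hAnsucc : ∀ (x : X) (n : ℕ), An x (n + 1) = (An x n).trans (A (f^[n] x)))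
    (R : X → X → Prop)
    (hRinv : ∀ x y, R x y → R (f.symm x) (f.symm y))
    (lam : ℝ) (hlam0 : 0 < lam) (hlam1 : lam < 1)
    (hcontr : ∀ x y, R x y → ∀ n : ℕ,
      dist ((⇑f.symm)^[n] x) ((⇑f.symm)^[n] y) ≤ lam ^ n * dist x y)
    (K mu beta : ℝ) (hbeta : 0 < beta) (hK : 0 < K)
    (hgrowth : ∀ (x : X) (n : ℕ),
      ‖(An x n : E →L[ℝ] E)‖ * ‖((An x n).symm : E →L[ℝ] E)‖ ≤ K * mu ^ n)
    (hbunch : mu * lam ^ beta < 1)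
    (H H' : X → X → (E →L[ℝ] E)) (C C' : ℝ)
    (hHa : ∀ x, H x x = ContinuousLinearMap.id ℝ E)
    (hHgrpd : ∀ x y z, R x y → R y z → R x z → (H y z).comp (H x y) = H x z)
    (hHb : ∀ x y, R x y → ∀ n : ℕ,
      H x y = (An ((⇑f.symm)^[n] y) n : E →L[ℝ] E) ∘L
        H ((⇑f.symm)^[n] x) ((⇑f.symm)^[n] y) ∘L
          ((An ((⇑f.symm)^[n] x) n).symm : E →L[ℝ] E))
    (hHc : ∀ x y, R x y → ‖H x y - ContinuousLinearMap.id ℝ E‖ ≤ C * dist x y ^ beta)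
    (hH'a : ∀ x, H' x x = ContinuousLinearMap.id ℝ E)
    (hH'grpd : ∀ x y z, R x y → R y z → R x z → (H' y z).comp (H' x y) = H' x z)
    (hH'b : ∀ x y, R x y → ∀ n : ℕ,
      H' x y = (An ((⇑f.symm)^[n] y) n : E →L[ℝ] E) ∘L
        H' ((⇑f.symm)^[n] x) ((⇑f.symm)^[n] y) ∘L
          ((An ((⇑f.symm)^[n] x) n).symm : E →L[ℝ] E))
    (hH'c : ∀ x y, R x y → ‖H' x y - ContinuousLinearMap.id ℝ E‖ ≤ C' * dist x y ^ beta) :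
    ∀ x y, R x y → H x y = H' x y := by
  intro x y hxy
  rcases subsingleton_or_nontrivial E with hE | hE
  · ext e; exact Subsingleton.elim _ _
  by_cases hxy0 : x = y
  · subst hxy0; rw [hHa, hH'a]
  have hd : 0 < dist x y := dist_pos.2 hxy0
  have hdb : 0 < dist x y ^ beta := Real.rpow_pos_of_pos hd beta
  -- the relation holds along past orbits
  have hRn : ∀ n : ℕ, R ((⇑f.symm)^[n] x) ((⇑f.symm)^[n] y) := by
    intro n; induction n with
    | zero => exact hxy
    | succ n ih =>
        rw [Function.iterate_succ_apply', Function.iterate_succ_apply']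
        exact hRinv _ _ ih
  -- `K * mu ^ n ≥ 1`
  have hone : ∀ n : ℕ, 1 ≤ K * mu ^ n := by
    intro n
    refine le_trans ?_ (hgrowth x n)
    calc (1:ℝ) = ‖ContinuousLinearMap.id ℝ E‖ := (ContinuousLinearMap.norm_id).symm
      _ = ‖(An x n : E →L[ℝ] E) ∘L ((An x n).symm : E →L[ℝ] E)‖ := by
          rw [(An x n).coe_comp_coe_symm]
      _ ≤ _ := ContinuousLinearMap.opNorm_comp_le _ _
  have hmu : 0 < mu := by nlinarith [hone 1]
  have hC : 0 ≤ C := by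
    nlinarith [hHc x y hxy, norm_nonneg (H x y - ContinuousLinearMap.id ℝ E), hdb]
  have hC' : 0 ≤ C' := by
    nlinarith [hH'c x y hxy, norm_nonneg (H' x y - ContinuousLinearMap.id ℝ E), hdb]
  -- distance estimate along past orbit, raised to power beta
  have hpow : ∀ n : ℕ, (lam ^ n : ℝ) ^ beta = (lam ^ beta) ^ n := by
    intro n
    rw [← Real.rpow_natCast lam n, ← Real.rpow_natCast (lam ^ beta) n,
      ← Real.rpow_mul hlam0.le, ← Real.rpow_mul hlam0.le, mul_comm]
  have hdist : ∀ n : ℕ,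
      dist ((⇑f.symm)^[n] x) ((⇑f.symm)^[n] y) ^ beta
        ≤ (lam ^ beta) ^ n * dist x y ^ beta := by
    intro n
    have h1 := Real.rpow_le_rpow dist_nonneg (hcontr x y hxy n) hbeta.le
    rwa [Real.mul_rpow (pow_nonneg hlam0.le n) hd.le, hpow n] at h1
  -- closeness of H, H' to identity along the past orbit
  have hHn : ∀ n : ℕ,
      ‖H ((⇑f.symm)^[n] x) ((⇑f.symm)^[n] y) - ContinuousLinearMap.id ℝ E‖
        ≤ C * ((lam ^ beta) ^ n * dist x y ^ beta) :=
    fun n => le_trans (hHc _ _ (hRn n)) (mul_le_mul_of_nonneg_left (hdist n) hC)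
  have hH'n : ∀ n : ℕ,
      ‖H' ((⇑f.symm)^[n] x) ((⇑f.symm)^[n] y) - ContinuousLinearMap.id ℝ E‖
        ≤ C' * ((lam ^ beta) ^ n * dist x y ^ beta) :=
    fun n => le_trans (hH'c _ _ (hRn n)) (mul_le_mul_of_nonneg_left (hdist n) hC')
  -- the main norm estimate
  have hmain : ∀ n : ℕ, ‖H x y - H' x y‖
      ≤ ‖(An ((⇑f.symm)^[n] y) n : E →L[ℝ] E)‖ *
        (‖H ((⇑f.symm)^[n] x) ((⇑f.symm)^[n] y) - H' ((⇑f.symm)^[n] x) ((⇑f.symm)^[n] y)‖ *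
          ‖((An ((⇑f.symm)^[n] x) n).symm : E →L[ℝ] E)‖) := by
    intro n
    calc ‖H x y - H' x y‖
        = ‖(An ((⇑f.symm)^[n] y) n : E →L[ℝ] E) ∘L
            ((H ((⇑f.symm)^[n] x) ((⇑f.symm)^[n] y) -
              H' ((⇑f.symm)^[n] x) ((⇑f.symm)^[n] y)) ∘L
              ((An ((⇑f.symm)^[n] x) n).symm : E →L[ℝ] E))‖ := by
          rw [hHb x y hxy n, hH'b x y hxy n, ← ContinuousLinearMap.comp_sub,
            ← ContinuousLinearMap.sub_comp]
      _ ≤ ‖(An ((⇑f.symm)^[n] y) n : E →L[ℝ] E)‖ *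
            ‖(H ((⇑f.symm)^[n] x) ((⇑f.symm)^[n] y) -
              H' ((⇑f.symm)^[n] x) ((⇑f.symm)^[n] y)) ∘L
              ((An ((⇑f.symm)^[n] x) n).symm : E →L[ℝ] E)‖ :=
          ContinuousLinearMap.opNorm_comp_le _ _
      _ ≤ _ := by
          gcongr
          exact ContinuousLinearMap.opNorm_comp_le _ _
  -- self-improving bound on the product of norms
  have hP : ∀ n : ℕ,
      ‖(An ((⇑f.symm)^[n] y) n : E →L[ℝ] E)‖ * ‖((An ((⇑f.symm)^[n] x) n).symm : E →L[ℝ] E)‖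
        ≤ K * mu ^ n * (‖H x y‖ + C * ((lam ^ beta) ^ n * dist x y ^ beta) *
          (‖(An ((⇑f.symm)^[n] y) n : E →L[ℝ] E)‖ *
            ‖((An ((⇑f.symm)^[n] x) n).symm : E →L[ℝ] E)‖)) := by
    intro n
    set Ay : E →L[ℝ] E := (An ((⇑f.symm)^[n] y) n : E →L[ℝ] E) with hAy
    set Axi : E →L[ℝ] E := ((An ((⇑f.symm)^[n] x) n).symm : E →L[ℝ] E) with hAxi
    set Ax : E →L[ℝ] E := (An ((⇑f.symm)^[n] x) n : E →L[ℝ] E) with hAx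
    set Hn : E →L[ℝ] E := H ((⇑f.symm)^[n] x) ((⇑f.symm)^[n] y) with hHnn
    have e1 : Ay ∘L Axi = H x y - Ay ∘L ((Hn - ContinuousLinearMap.id ℝ E) ∘L Axi) := by
      ext v
      rw [hHb x y hxy n]
      simp [Ay, Axi, Hn, map_sub]
    have hg : ‖Ay ∘L Axi‖ ≤ ‖H x y‖ + ‖Ay‖ * (‖Hn - ContinuousLinearMap.id ℝ E‖ * ‖Axi‖) := by
      rw [e1]
      refine le_trans (norm_sub_le _ _) ?_
      gcongr
      refine le_trans (ContinuousLinearMap.opNorm_comp_le _ _) ?_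
      gcongr
      exact ContinuousLinearMap.opNorm_comp_le _ _
    have e2 : Ay = (Ay ∘L Axi) ∘L Ax := by
      ext v
      simp [Ay, Axi, Ax]
    have ha : ‖Ay‖ ≤ ‖Ay ∘L Axi‖ * ‖Ax‖ := by
      conv_lhs => rw [e2]
      exact ContinuousLinearMap.opNorm_comp_le _ _
    have hcb : ‖Ax‖ * ‖Axi‖ ≤ K * mu ^ n := hgrowth _ n
    have hab : ‖Ay‖ * ‖Axi‖ ≤ ‖Ay ∘L Axi‖ * (K * mu ^ n) := by
      calc ‖Ay‖ * ‖Axi‖ ≤ (‖Ay ∘L Axi‖ * ‖Ax‖) * ‖Axi‖ :=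
            mul_le_mul_of_nonneg_right ha (norm_nonneg _)
        _ = ‖Ay ∘L Axi‖ * (‖Ax‖ * ‖Axi‖) := by ring
        _ ≤ _ := mul_le_mul_of_nonneg_left hcb (norm_nonneg _)
    have hKmu : (0:ℝ) ≤ K * mu ^ n := le_trans zero_le_one (hone n)
    have hHnc := hHn n
    nlinarith [mul_le_mul_of_nonneg_right hg hKmu, hab,
      mul_nonneg (norm_nonneg Ay) (norm_nonneg Axi),
      mul_le_mul_of_nonneg_right hHnc
        (mul_nonneg (mul_nonneg (norm_nonneg Ay) (norm_nonneg Axi)) hKmu)]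
  -- eventually the coefficient is at most 1/2
  have hrt : Filter.Tendsto (fun n : ℕ => K * C * dist x y ^ beta * (mu ^ n * (lam ^ beta) ^ n))
      Filter.atTop (nhds 0) := by
    have h0 : (0:ℝ) ≤ mu * lam ^ beta := by positivity
    have := (tendsto_pow_atTop_nhds_zero_of_lt_one h0 hbunch).const_mul
      (K * C * dist x y ^ beta)
    simpa [← mul_pow] using this
  have heven : ∀ᶠ n : ℕ in Filter.atTop,
      K * C * dist x y ^ beta * (mu ^ n * (lam ^ beta) ^ n) ≤ 1/2 :=
    hrt.eventually_le_const (by norm_num)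
  -- eventual bound on the difference
  have hfin : ∀ᶠ n : ℕ in Filter.atTop, ‖H x y - H' x y‖
      ≤ 2 * K * ‖H x y‖ * (C + C') * dist x y ^ beta * (mu ^ n * (lam ^ beta) ^ n) := by
    filter_upwards [heven] with n hn
    set a := ‖(An ((⇑f.symm)^[n] y) n : E →L[ℝ] E)‖ with hadef
    set b := ‖((An ((⇑f.symm)^[n] x) n).symm : E →L[ℝ] E)‖ with hbdef
    have hab0 : 0 ≤ a * b := mul_nonneg (norm_nonneg _) (norm_nonneg _)
    have hKmu : (0:ℝ) ≤ K * mu ^ n := le_trans zero_le_one (hone n)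
    have hab2 : a * b ≤ 2 * (K * mu ^ n) * ‖H x y‖ := by
      nlinarith [hP n, mul_nonneg hab0 (mul_nonneg
        (mul_nonneg (mul_nonneg hK.le hC) (le_of_lt hdb)) (by positivity :
          (0:ℝ) ≤ mu ^ n * (lam ^ beta) ^ n))]
    have hs : ‖H ((⇑f.symm)^[n] x) ((⇑f.symm)^[n] y) -
        H' ((⇑f.symm)^[n] x) ((⇑f.symm)^[n] y)‖
        ≤ (C + C') * ((lam ^ beta) ^ n * dist x y ^ beta) := by
      calc ‖H ((⇑f.symm)^[n] x) ((⇑f.symm)^[n] y) -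
            H' ((⇑f.symm)^[n] x) ((⇑f.symm)^[n] y)‖
          = ‖(H ((⇑f.symm)^[n] x) ((⇑f.symm)^[n] y) - ContinuousLinearMap.id ℝ E) -
              (H' ((⇑f.symm)^[n] x) ((⇑f.symm)^[n] y) - ContinuousLinearMap.id ℝ E)‖ := by
            rw [sub_sub_sub_cancel_right]
        _ ≤ _ := norm_sub_le _ _
        _ ≤ C * ((lam ^ beta) ^ n * dist x y ^ beta) +
              C' * ((lam ^ beta) ^ n * dist x y ^ beta) := add_le_add (hHn n) (hH'n n)
        _ = _ := by ring
    have h1 : ‖H x y - H' x y‖ ≤ a * ((C + C') * ((lam ^ beta) ^ n * dist x y ^ beta) * b) := by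
      refine le_trans (hmain n) ?_
      gcongr
    calc ‖H x y - H' x y‖ ≤ a * ((C + C') * ((lam ^ beta) ^ n * dist x y ^ beta) * b) := h1
      _ = (C + C') * ((lam ^ beta) ^ n * dist x y ^ beta) * (a * b) := by ring
      _ ≤ (C + C') * ((lam ^ beta) ^ n * dist x y ^ beta) * (2 * (K * mu ^ n) * ‖H x y‖) := by
          gcongr
      _ = 2 * K * ‖H x y‖ * (C + C') * dist x y ^ beta * (mu ^ n * (lam ^ beta) ^ n) := by ring
  -- conclude by letting n → ∞
  have htend2 : Filter.Tendsto
      (fun n : ℕ => 2 * K * ‖H x y‖ * (C + C') * dist x y ^ beta * (mu ^ n * (lam ^ beta) ^ n))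
      Filter.atTop (nhds 0) := by
    have h0 : (0:ℝ) ≤ mu * lam ^ beta := by positivity
    have := (tendsto_pow_atTop_nhds_zero_of_lt_one h0 hbunch).const_mul
      (2 * K * ‖H x y‖ * (C + C') * dist x y ^ beta)
    simpa [← mul_pow] using this
  have hL : ‖H x y - H' x y‖ ≤ 0 := ge_of_tendsto htend2 hfin
  rw [← sub_eq_zero]
  exact norm_le_zero_iff.mp hL
end
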